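/- Let d ≥ 1 and α > 0. There is a constant C (depending only on d and α) such that for all R ≥ 1 (with R ∉ ℤ, 2R ∈ ℤ) and all i, k ∈ ℤ^d with |i - k| ≤ 2R: q_i := Σ_{ℓ ∈ B_R(k) ∩ B_R(i)} Σ_{j ∉ B_R(ℓ)} (1 + |i - j|)^{-(2d+α)} ≤ C R^{d-1}. -/

import Mathlib

/-!
Swap the two sums. For fixed `j`, the points `ℓ` of the cube of radius `N = ⌊R⌋` around `i` that
miss the cube around `j` lie in `d` slabs, the `m`-th of width `|i_m - j_m|`, so there are at most
`d |i - j| (2N + 1)^(d-1)` of them. The double sum is therefore at most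
`d (3R)^(d-1) ∑_x |x| (1 + |x|)^(-(2d+α))`, and this series converges because `2d + α - 1 > d`:
`(1 + |x|)^(-s)` is dominated by the product `∏_m (1 + |x_m|)^(-s/d)` of one-dimensional
summable factors.
-/

open Finset

section Summability

variable {ι : Type*} [Fintype ι]

theorem summable_pi_prod_of_nonneg {α : Type*} {f : α → ℝ} (hf₀ : 0 ≤ f) (hf : Summable f) :
    Summable fun x : ι → α => ∏ m, f (x m) := by
  classical
  refine summable_of_sum_le (c := ∏ _m : ι, ∑' a, f a)
    (fun x => prod_nonneg fun m _ => hf₀ _) fun F => ?_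
  set T : Finset α := F.biUnion fun x => univ.image x
  have hF : F ⊆ Fintype.piFinset fun _ => T := fun x hx =>
    Fintype.mem_piFinset.2 fun m => mem_biUnion.2 ⟨x, hx, mem_image_of_mem x (mem_univ m)⟩
  calc ∑ x ∈ F, ∏ m, f (x m) ≤ ∑ x ∈ Fintype.piFinset fun _ => T, ∏ m, f (x m) :=
        sum_le_sum_of_subset_of_nonneg hF fun x _ _ => prod_nonneg fun m _ => hf₀ _
    _ = ∏ _m : ι, ∑ a ∈ T, f a := (prod_univ_sum _ _).symm
    _ ≤ ∏ _m : ι, ∑' a, f a := prod_le_prod (fun _ _ => sum_nonneg fun a _ => hf₀ a)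
        fun _ _ => hf.sum_le_tsum _ fun a _ => hf₀ a

theorem summable_one_add_norm_int_rpow_neg {t : ℝ} (ht : 1 < t) :
    Summable fun n : ℤ => (1 + ‖n‖) ^ (-t) := by
  refine (Real.summable_abs_int_rpow ht).of_norm_bounded_eventually ?_
  filter_upwards [Filter.eventually_cofinite_ne 0] with n hn
  rw [Real.norm_of_nonneg (by positivity), Int.norm_eq_abs]
  exact Real.rpow_le_rpow_of_nonpos (abs_pos.2 (Int.cast_ne_zero.2 hn)) (by linarith)
    (by linarith)

theorem one_add_norm_rpow_neg_le_prod [Nonempty ι] {E : Type*} [SeminormedAddGroup E]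
    (x : ι → E) {s : ℝ} (hs : 0 ≤ s) :
    (1 + ‖x‖) ^ (-s) ≤ ∏ m, (1 + ‖x m‖) ^ (-(s / Fintype.card ι)) := by
  have hι : (Fintype.card ι : ℝ) ≠ 0 := by exact_mod_cast Fintype.card_ne_zero
  calc (1 + ‖x‖) ^ (-s) = ∏ _m : ι, (1 + ‖x‖) ^ (-(s / Fintype.card ι)) := by
        rw [prod_const, card_univ, ← Real.rpow_mul_natCast (by positivity)]
        field_simp
    _ ≤ ∏ m, (1 + ‖x m‖) ^ (-(s / Fintype.card ι)) :=
        prod_le_prod (fun _ _ => by positivity) fun m _ =>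
          Real.rpow_le_rpow_of_nonpos (by positivity) (by grw [norm_le_pi_norm x m])
            (by simp only [Left.neg_nonpos_iff]; positivity)

theorem summable_one_add_norm_rpow_neg {s : ℝ} (hs : Fintype.card ι < s) :
    Summable fun x : ι → ℤ => (1 + ‖x‖) ^ (-s) := by
  cases isEmpty_or_nonempty ι
  · exact .of_finite
  have hι : (0 : ℝ) < Fintype.card ι := by exact_mod_cast Fintype.card_pos
  exact (summable_pi_prod_of_nonneg (fun n => by positivity) (summable_one_add_norm_int_rpow_neg
    ((one_lt_div hι).2 hs))).of_nonneg_of_le (fun x => by positivity)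
    fun x => one_add_norm_rpow_neg_le_prod x (hι.le.trans hs.le)

theorem summable_norm_mul_one_add_norm_rpow_neg {p : ℝ} (hp : Fintype.card ι + 1 < p) :
    Summable fun x : ι → ℤ => ‖x‖ * (1 + ‖x‖) ^ (-p) := by
  refine (summable_one_add_norm_rpow_neg (s := p - 1) (by linarith)).of_nonneg_of_le
    (fun x => by positivity) fun x => ?_
  calc ‖x‖ * (1 + ‖x‖) ^ (-p) ≤ (1 + ‖x‖) * (1 + ‖x‖) ^ (-p) :=
        mul_le_mul_of_nonneg_right (by linarith [norm_nonneg x]) (by positivity)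
    _ = (1 + ‖x‖) ^ (-(p - 1)) := by
        rw [← Real.rpow_one_add' (by positivity) (by linarith)]; ring_nf

end Summability

section Cube

variable {ι : Type*} [Fintype ι] [DecidableEq ι]

noncomputable def cube (i : ι → ℤ) (N : ℕ) : Finset (ι → ℤ) :=
  Fintype.piFinset fun m => Icc (i m - N) (i m + N)

theorem mem_cube_floor_iff {R : ℝ} (hR : 0 ≤ R) {i x : ι → ℤ} :
    x ∈ cube i ⌊R⌋₊ ↔ ‖x - i‖ ≤ R := by
  rw [cube, Fintype.mem_piFinset, pi_norm_le_iff_of_nonneg hR]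
  refine forall_congr' fun m => ?_
  rw [mem_Icc, Pi.sub_apply, Int.norm_eq_abs, ← Int.cast_abs, ← Nat.cast_natAbs,
    ← Nat.le_floor_iff hR]
  omega

theorem card_Icc_sdiff_Icc_le (a b : ℤ) (N : ℕ) :
    #(Icc (a - N) (a + N) \ Icc (b - N) (b + N)) ≤ (a - b).natAbs := by
  have hsub : Icc (a - N) (a + N) \ Icc (b - N) (b + N) ⊆
      Icc (a - N) (b - N - 1) ∪ Icc (b + N + 1) (a + N) := by
    intro x
    simp only [mem_sdiff, mem_Icc, mem_union]
    omega
  calc _ ≤ #(Icc (a - N) (b - N - 1) ∪ Icc (b + N + 1) (a + N)) := card_le_card hsub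
    _ ≤ #(Icc (a - N) (b - N - 1)) + #(Icc (b + N + 1) (a + N)) := card_union_le _ _
    _ ≤ (a - b).natAbs := by simp only [Int.card_Icc]; omega

theorem card_cube_sdiff_cube_le (i j : ι → ℤ) (N : ℕ) :
    #(cube i N \ cube j N) ≤
      (∑ m, (i m - j m).natAbs) * (2 * N + 1) ^ (Fintype.card ι - 1) := by
  set slab : ι → Finset (ι → ℤ) := fun m => Fintype.piFinset <|
    Function.update (fun m' => Icc (i m' - N) (i m' + N)) m
      (Icc (i m - N) (i m + N) \ Icc (j m - N) (j m + N))
  have hsub : cube i N \ cube j N ⊆ univ.biUnion slab := by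
    intro x hx
    simp only [mem_sdiff, cube, Fintype.mem_piFinset, not_forall] at hx
    obtain ⟨hi, m, hm⟩ := hx
    refine mem_biUnion.2 ⟨m, mem_univ m, Fintype.mem_piFinset.2 fun m' => ?_⟩
    rcases eq_or_ne m' m with rfl | h
    · simp [hi m', hm]
    · simp [h, hi m']
  have hslab : ∀ m, #(slab m) = #(Icc (i m - N) (i m + N) \ Icc (j m - N) (j m + N)) *
      (2 * N + 1) ^ (Fintype.card ι - 1) := by
    intro m
    have hIcc (a : ℤ) : #(Icc (a - N) (a + N)) = 2 * N + 1 := by rw [Int.card_Icc]; omega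
    rw [Fintype.card_piFinset, Fintype.prod_eq_mul_prod_compl m, Function.update_self,
      prod_congr rfl fun m' hm' => by rw [Function.update_of_ne (by simpa using hm'), hIcc],
      prod_const, card_compl, card_singleton]
  calc _ ≤ #(univ.biUnion slab) := card_le_card hsub
    _ ≤ ∑ m, #(slab m) := card_biUnion_le
    _ ≤ _ := by
      simp only [hslab, sum_mul]
      exact sum_le_sum fun m _ => Nat.mul_le_mul_right _ (card_Icc_sdiff_Icc_le _ _ _)

theorem card_cube_sdiff_cube_le_norm (i j : ι → ℤ) (N : ℕ) :
    (#(cube i N \ cube j N) : ℝ) ≤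
      Fintype.card ι * (2 * N + 1) ^ (Fintype.card ι - 1) * ‖i - j‖ :=
  calc (#(cube i N \ cube j N) : ℝ)
      ≤ ((∑ m, (i m - j m).natAbs) * (2 * N + 1) ^ (Fintype.card ι - 1) : ℕ) := by
        exact_mod_cast card_cube_sdiff_cube_le i j N
    _ = (∑ m, ‖(i - j) m‖) * (2 * N + 1) ^ (Fintype.card ι - 1) := by
        push_cast [Pi.sub_apply, Int.norm_eq_abs, Nat.cast_natAbs]
        rfl
    _ ≤ (∑ _m : ι, ‖i - j‖) * (2 * N + 1) ^ (Fintype.card ι - 1) := by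
        gcongr with m
        exact norm_le_pi_norm _ m
    _ = _ := by simp only [sum_const, card_univ, nsmul_eq_mul]; ring

theorem tsum_tsum_le_of_le_cube_sdiff {p : ℝ} (hp : Fintype.card ι + 1 < p) (i : ι → ℤ) (N : ℕ)
    {f : (ι → ℤ) → (ι → ℤ) → ℝ} (hf₀ : ∀ ℓ j, 0 ≤ f ℓ j)
    (hf : ∀ ℓ j, f ℓ j ≤ if ℓ ∈ cube i N \ cube j N then (1 + ‖i - j‖) ^ (-p) else 0) :
    ∑' ℓ, ∑' j, f ℓ j ≤
      Fintype.card ι * (2 * N + 1) ^ (Fintype.card ι - 1) *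
        ∑' x : ι → ℤ, ‖x‖ * (1 + ‖x‖) ^ (-p) := by
  set c : ℝ := Fintype.card ι * (2 * N + 1) ^ (Fintype.card ι - 1)
  set w : (ι → ℤ) → ℝ := fun x => ‖x‖ * (1 + ‖x‖) ^ (-p)
  set g : (ι → ℤ) → (ι → ℤ) → ℝ := fun ℓ j =>
    if ℓ ∈ cube i N \ cube j N then (1 + ‖i - j‖) ^ (-p) else 0
  have hv : Summable fun j => (1 + ‖i - j‖) ^ (-p) :=
    (Equiv.subLeft i).summable_iff.2 (summable_one_add_norm_rpow_neg (by linarith))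
  have hg : ∀ ℓ, Summable (g ℓ) := fun ℓ =>
    hv.of_nonneg_of_le (fun j => by positivity) fun j => by
      simp only [g]
      split_ifs
      exacts [le_rfl, by positivity]
  have hpt : ∀ j, #(cube i N \ cube j N) * (1 + ‖i - j‖) ^ (-p) ≤ c * w (i - j) := fun j =>
    (mul_le_mul_of_nonneg_right (card_cube_sdiff_cube_le_norm i j N) (by positivity)).trans_eq
      (mul_assoc _ _ _)
  calc ∑' ℓ, ∑' j, f ℓ j = ∑ ℓ ∈ cube i N, ∑' j, f ℓ j := tsum_eq_sum fun ℓ hℓ => by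
        have : ∀ j, f ℓ j = 0 := fun j =>
          le_antisymm ((hf ℓ j).trans (by simp [hℓ])) (hf₀ ℓ j)
        simp [this]
    _ ≤ ∑ ℓ ∈ cube i N, ∑' j, g ℓ j := sum_le_sum fun ℓ _ =>
        ((hg ℓ).of_nonneg_of_le (hf₀ ℓ) (hf ℓ)).tsum_le_tsum (hf ℓ) (hg ℓ)
    _ = ∑' j, ∑ ℓ ∈ cube i N, g ℓ j := (Summable.tsum_finsetSum fun ℓ _ => hg ℓ).symm
    _ = ∑' j, #(cube i N \ cube j N) * (1 + ‖i - j‖) ^ (-p) := tsum_congr fun j => by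
        simp only [g]
        rw [Finset.sum_ite_mem, inter_eq_right.2 sdiff_subset, sum_const, nsmul_eq_mul]
    _ ≤ ∑' j, c * w (i - j) :=
        have hcw : Summable fun j => c * w (i - j) :=
          ((Equiv.subLeft i).summable_iff.2
            (summable_norm_mul_one_add_norm_rpow_neg hp)).mul_left c
        (hcw.of_nonneg_of_le (fun j => by positivity) hpt).tsum_le_tsum hpt hcw
    _ = c * ∑' x, w x := by rw [tsum_mul_left]; exact congrArg _ ((Equiv.subLeft i).tsum_eq w)

end Cube

open Classical in
theorem boundary_weight_estimate (d : ℕ) (hd : 1 ≤ d) (α : ℝ) (hα : 0 < α) :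
    ∃ C : ℝ, 0 < C ∧ ∀ R : ℝ, 1 ≤ R → (¬ ∃ z : ℤ, (z : ℝ) = R) →
      (∃ z : ℤ, (z : ℝ) = 2 * R) →
      ∀ i k : Fin d → ℤ, ‖i - k‖ ≤ 2 * R →
        ∑' ℓ : Fin d → ℤ, ∑' j : Fin d → ℤ,
            (if ‖ℓ - k‖ ≤ R ∧ ‖ℓ - i‖ ≤ R ∧ ¬ ‖j - ℓ‖ ≤ R
              then (1 + ‖i - j‖) ^ (-(2 * (d : ℝ) + α)) else 0)
          ≤ C * R ^ ((d : ℝ) - 1) := by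
  set S := ∑' x : Fin d → ℤ, ‖x‖ * (1 + ‖x‖) ^ (-(2 * (d : ℝ) + α))
  have hS : 0 ≤ S := tsum_nonneg fun x => by positivity
  refine ⟨d * 3 ^ (d - 1) * S + 1, by positivity, fun R hR _ _ i k _ => ?_⟩
  have hR₀ : 0 ≤ R := by linarith
  have hp : (Fintype.card (Fin d) : ℝ) + 1 < 2 * d + α := by
    rw [Fintype.card_fin]; linarith [(by exact_mod_cast hd : (1 : ℝ) ≤ d)]
  have hN : (2 * ⌊R⌋₊ + 1 : ℝ) ≤ 3 * R := by linarith [Nat.floor_le hR₀]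
  calc _ ≤ Fintype.card (Fin d) * (2 * ⌊R⌋₊ + 1) ^ (Fintype.card (Fin d) - 1) * S := by
        refine tsum_tsum_le_of_le_cube_sdiff hp i ⌊R⌋₊ (fun ℓ j => by positivity) fun ℓ j => ?_
        simp only [mem_sdiff, mem_cube_floor_iff hR₀, norm_sub_rev j ℓ]
        split_ifs with h h'
        · exact le_rfl
        · exact absurd ⟨h.2.1, h.2.2⟩ h'
        · positivity
        · exact le_rfl
    _ ≤ d * (3 * R) ^ (d - 1) * S := by rw [Fintype.card_fin]; gcongr
    _ = d * 3 ^ (d - 1) * S * R ^ ((d : ℝ) - 1) := by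
        rw [mul_pow, ← Real.rpow_natCast R, Nat.cast_sub hd, Nat.cast_one]
        ring
    _ ≤ (d * 3 ^ (d - 1) * S + 1) * R ^ ((d : ℝ) - 1) := by gcongr; linarith
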